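/- Let a, b, c : ℝ → ℝ be smooth with a > 0, and suppose u(t,x) := a(x)t² + b(x)t + c(x) satisfies u_tt·u_xx − (u_tx)² = 1 at every point of ℝ². Then u is a quadratic polynomial in (t,x), i.e., a is constant, b is an affine function of x, and c is a quadratic polynomial in x. -/

import Mathlib

noncomputable section

/-- helper: a function with constant derivative is affine. -/
lemma aux_affine_of_deriv_const (f : ℝ → ℝ) (hf : Differentiable ℝ f) (m : ℝ)
    (h : ∀ x, deriv f x = m) : ∀ x, f x = f 0 + m * x := by
  intro x
  have hd : Differentiable ℝ (fun y => f y - m * y) := hf.sub (differentiable_id.const_mul m)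
  have hz : ∀ z, deriv (fun y => f y - m * y) z = 0 := by
    intro z
    have h1 : HasDerivAt (fun y => f y - m * y) (m - m * 1) z :=
      (((hf z).hasDerivAt).congr_deriv (by rw [h z])).sub ((hasDerivAt_id z).const_mul m)
    rw [h1.deriv]; ring
  have := is_const_of_deriv_eq_zero hd hz x 0
  simp at this
  linarith

/-- helper: a function whose derivative is affine is quadratic. -/
lemma aux_quad_of_deriv_affine (f : ℝ → ℝ) (hf : Differentiable ℝ f) (m K : ℝ)
    (h : ∀ x, deriv f x = m + K * x) : ∀ x, f x = f 0 + m * x + (K / 2) * x ^ 2 := by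
  intro x
  have hd : Differentiable ℝ (fun y => f y - (m * y + (K / 2) * y ^ 2)) :=
    hf.sub ((differentiable_id.const_mul m).add ((differentiable_pow 2).const_mul (K / 2)))
  have hz : ∀ z, deriv (fun y => f y - (m * y + (K / 2) * y ^ 2)) z = 0 := by
    intro z
    have h1 : HasDerivAt (fun y : ℝ => m * y + (K / 2) * y ^ 2)
        (m * 1 + (K / 2) * (↑(2 : ℕ) * z ^ 1 * 1)) z :=
      ((hasDerivAt_id z).const_mul m).add (((hasDerivAt_id z).pow 2).const_mul (K / 2))
    have h2 : HasDerivAt (fun y => f y - (m * y + (K / 2) * y ^ 2))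
        ((m + K * z) - (m * 1 + (K / 2) * (↑(2 : ℕ) * z ^ 1 * 1))) z :=
      (((hf z).hasDerivAt).congr_deriv (by rw [h z])).sub h1
    rw [h2.deriv]; push_cast; ring
  have := is_const_of_deriv_eq_zero hd hz x 0
  simp at this
  linarith

lemma aux_key (a b c : ℝ → ℝ) (ha : Differentiable ℝ a) (hb : Differentiable ℝ b)
    (hc : Differentiable ℝ c) (p : ℝ × ℝ) :
    HasFDerivAt (fun q : ℝ × ℝ => a q.2 * q.1 ^ 2 + b q.2 * q.1 + c q.2)
      ((2 * a p.2 * p.1 + b p.2) • ContinuousLinearMap.fst ℝ ℝ ℝ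
        + (deriv a p.2 * p.1 ^ 2 + deriv b p.2 * p.1 + deriv c p.2)
            • ContinuousLinearMap.snd ℝ ℝ ℝ) p := by
  simp only [pow_two]
  have h1 : HasFDerivAt (fun q : ℝ × ℝ => a q.2) (deriv a p.2 • ContinuousLinearMap.snd ℝ ℝ ℝ) p :=
    (ha.differentiableAt.hasDerivAt).comp_hasFDerivAt p hasFDerivAt_snd
  have h2 : HasFDerivAt (fun q : ℝ × ℝ => b q.2) (deriv b p.2 • ContinuousLinearMap.snd ℝ ℝ ℝ) p :=
    (hb.differentiableAt.hasDerivAt).comp_hasFDerivAt p hasFDerivAt_snd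
  have h3 : HasFDerivAt (fun q : ℝ × ℝ => c q.2) (deriv c p.2 • ContinuousLinearMap.snd ℝ ℝ ℝ) p :=
    (hc.differentiableAt.hasDerivAt).comp_hasFDerivAt p hasFDerivAt_snd
  have hfst : HasFDerivAt (fun q : ℝ × ℝ => q.1) (ContinuousLinearMap.fst ℝ ℝ ℝ) p := hasFDerivAt_fst
  have h := ((h1.mul (hfst.mul hfst)).add (h2.mul hfst)).add h3
  refine h.congr_fderiv ?_
  refine ContinuousLinearMap.ext fun v => ?_
  simp
  ring

lemma aux_key2 (A B : ℝ → ℝ) (hA : Differentiable ℝ A) (hB : Differentiable ℝ B) (p : ℝ × ℝ) :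
    HasFDerivAt (fun q : ℝ × ℝ => A q.2 * q.1 + B q.2)
      (A p.2 • ContinuousLinearMap.fst ℝ ℝ ℝ
        + (deriv A p.2 * p.1 + deriv B p.2) • ContinuousLinearMap.snd ℝ ℝ ℝ) p := by
  have h1 : HasFDerivAt (fun q : ℝ × ℝ => A q.2) (deriv A p.2 • ContinuousLinearMap.snd ℝ ℝ ℝ) p :=
    (hA.differentiableAt.hasDerivAt).comp_hasFDerivAt p hasFDerivAt_snd
  have h2 : HasFDerivAt (fun q : ℝ × ℝ => B q.2) (deriv B p.2 • ContinuousLinearMap.snd ℝ ℝ ℝ) p :=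
    (hB.differentiableAt.hasDerivAt).comp_hasFDerivAt p hasFDerivAt_snd
  have hfst : HasFDerivAt (fun q : ℝ × ℝ => q.1) (ContinuousLinearMap.fst ℝ ℝ ℝ) p := hasFDerivAt_fst
  have h := (h1.mul hfst).add h2
  refine h.congr_fderiv ?_
  refine ContinuousLinearMap.ext fun v => ?_
  simp
  ring

/-- every entire solution of `u_tt u_xx − (u_tx)² = 1` on `ℝ²` of the
form `u(t,x) = a(x)t² + b(x)t + c(x)` is a quadratic polynomial: `a` is constant,
`b` is affine and `c` is quadratic. -/
theorem stmt14 (a b c : ℝ → ℝ)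
    (ha : ContDiff ℝ (⊤ : ℕ∞) a) (hb : ContDiff ℝ (⊤ : ℕ∞) b)
    (hc : ContDiff ℝ (⊤ : ℕ∞) c) (hapos : ∀ x, 0 < a x)
    (u : ℝ × ℝ → ℝ) (hu : u = fun p => a p.2 * p.1 ^ 2 + b p.2 * p.1 + c p.2)
    (heq : ∀ p : ℝ × ℝ,
      fderiv ℝ (fun q => fderiv ℝ u q (1, 0)) p (1, 0)
          * fderiv ℝ (fun q => fderiv ℝ u q (0, 1)) p (0, 1)
        - (fderiv ℝ (fun q => fderiv ℝ u q (1, 0)) p (0, 1)) ^ 2 = 1) :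
    (∃ a₀ : ℝ, ∀ x, a x = a₀) ∧
    (∃ b₀ b₁ : ℝ, ∀ x, b x = b₀ + b₁ * x) ∧
    (∃ c₀ c₁ c₂ : ℝ, ∀ x, c x = c₀ + c₁ * x + c₂ * x ^ 2) := by
  have hat : Differentiable ℝ a := ha.differentiable (by simp)
  have hbt : Differentiable ℝ b := hb.differentiable (by simp)
  have hct : Differentiable ℝ c := hc.differentiable (by simp)
  have hat' : Differentiable ℝ (deriv a) :=
    ((contDiff_infty_iff_deriv.mp ha).2).differentiable (by simp)
  have hbt' : Differentiable ℝ (deriv b) :=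
    ((contDiff_infty_iff_deriv.mp hb).2).differentiable (by simp)
  have hct' : Differentiable ℝ (deriv c) :=
    ((contDiff_infty_iff_deriv.mp hc).2).differentiable (by simp)
  -- first derivatives
  have hut : ∀ q : ℝ × ℝ, fderiv ℝ u q (1, 0) = 2 * a q.2 * q.1 + b q.2 := by
    intro q
    rw [hu, (aux_key a b c hat hbt hct q).fderiv]
    simp
  have hux : ∀ q : ℝ × ℝ, fderiv ℝ u q (0, 1)
      = deriv a q.2 * q.1 ^ 2 + deriv b q.2 * q.1 + deriv c q.2 := by
    intro q
    rw [hu, (aux_key a b c hat hbt hct q).fderiv]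
    simp
  have hfun1 : (fun q : ℝ × ℝ => fderiv ℝ u q (1, 0))
      = fun q : ℝ × ℝ => (fun x => 2 * a x) q.2 * q.1 + b q.2 := funext fun q => hut q
  have hfun2 : (fun q : ℝ × ℝ => fderiv ℝ u q (0, 1))
      = fun q : ℝ × ℝ => deriv a q.2 * q.1 ^ 2 + deriv b q.2 * q.1 + deriv c q.2 :=
    funext fun q => hux q
  -- second derivatives
  have h2tt : ∀ p : ℝ × ℝ, fderiv ℝ (fun q => fderiv ℝ u q (1, 0)) p (1, 0) = 2 * a p.2 := by
    intro p
    rw [hfun1, (aux_key2 (fun x => 2 * a x) b (hat.const_mul 2) hbt p).fderiv]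
    simp
  have h2tx : ∀ p : ℝ × ℝ, fderiv ℝ (fun q => fderiv ℝ u q (1, 0)) p (0, 1)
      = 2 * deriv a p.2 * p.1 + deriv b p.2 := by
    intro p
    rw [hfun1, (aux_key2 (fun x => 2 * a x) b (hat.const_mul 2) hbt p).fderiv]
    simp [deriv_const_mul 2 (hat p.2)]
  have h2xx : ∀ p : ℝ × ℝ, fderiv ℝ (fun q => fderiv ℝ u q (0, 1)) p (0, 1)
      = deriv (deriv a) p.2 * p.1 ^ 2 + deriv (deriv b) p.2 * p.1 + deriv (deriv c) p.2 := by
    intro p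
    rw [hfun2, (aux_key (deriv a) (deriv b) (deriv c) hat' hbt' hct' p).fderiv]
    simp
  -- master equation
  have master : ∀ t x : ℝ,
      2 * a x * (deriv (deriv a) x * t ^ 2 + deriv (deriv b) x * t + deriv (deriv c) x)
        - (2 * deriv a x * t + deriv b x) ^ 2 = 1 := by
    intro t x
    have h := heq (t, x)
    rw [h2tt (t, x), h2tx (t, x), h2xx (t, x)] at h
    exact h
  -- coefficient equations
  have hA : ∀ x, a x * deriv (deriv a) x = 2 * (deriv a x) ^ 2 := by
    intro x
    have e0 := master 0 x; have e1 := master 1 x; have e2 := master (-1) x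
    linear_combination (e1 + e2 - 2 * e0) / 4
  have hB : ∀ x, a x * deriv (deriv b) x = 2 * deriv a x * deriv b x := by
    intro x
    have e1 := master 1 x; have e2 := master (-1) x
    linear_combination (e1 - e2) / 4
  have hC : ∀ x, 2 * a x * deriv (deriv c) x - (deriv b x) ^ 2 = 1 := by
    intro x
    linear_combination master 0 x
  -- g = 1/a is affine, positive, hence constant
  have hane : ∀ x, a x ≠ 0 := fun x => ne_of_gt (hapos x)
  have hg1 : ∀ x, HasDerivAt (fun y => (a y)⁻¹) (-(deriv a x) / a x ^ 2) x := fun x =>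
    ((hat x).hasDerivAt).inv (hane x)
  have hgd : Differentiable ℝ (fun y => (a y)⁻¹) := fun x => (hg1 x).differentiableAt
  have hgderiv : ∀ x, deriv (fun y => (a y)⁻¹) x = -(deriv a x) / a x ^ 2 := fun x =>
    (hg1 x).deriv
  have hg2 : ∀ x, HasDerivAt (deriv (fun y => (a y)⁻¹)) 0 x := by
    intro x
    have heqf : deriv (fun y => (a y)⁻¹) = fun y => -(deriv a y) * (a y ^ 2)⁻¹ := by
      funext y; rw [hgderiv y, div_eq_mul_inv]
    rw [heqf]
    have hsq : HasDerivAt (fun y => a y ^ 2) (↑(2 : ℕ) * a x ^ 1 * deriv a x) x :=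
      ((hat x).hasDerivAt).pow 2
    have hinv : HasDerivAt (fun y => (a y ^ 2)⁻¹)
        (-(↑(2 : ℕ) * a x ^ 1 * deriv a x) / (a x ^ 2) ^ 2) x :=
      hsq.inv (pow_ne_zero 2 (hane x))
    have hnum : HasDerivAt (fun y => -(deriv a y)) (-(deriv (deriv a) x)) x :=
      ((hat' x).hasDerivAt).neg
    have hmul := hnum.mul hinv
    refine hmul.congr_deriv (Eq.symm ?_)
    have hAx := hA x
    have h2 := hane x
    field_simp
    linear_combination hAx
  have hgd' : Differentiable ℝ (deriv (fun y => (a y)⁻¹)) := fun x => (hg2 x).differentiableAt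
  have hgdz : ∀ x, deriv (deriv (fun y => (a y)⁻¹)) x = 0 := fun x => (hg2 x).deriv
  have hgconst : ∀ x, deriv (fun y => (a y)⁻¹) x = deriv (fun y => (a y)⁻¹) 0 := fun x =>
    is_const_of_deriv_eq_zero hgd' hgdz x 0
  have hgaff := aux_affine_of_deriv_const (fun y => (a y)⁻¹) hgd
    (deriv (fun y => (a y)⁻¹) 0) hgconst
  have hm : deriv (fun y => (a y)⁻¹) 0 = 0 := by
    by_contra hm
    have hx := hgaff ((-1 - (a 0)⁻¹) / (deriv (fun y => (a y)⁻¹) 0))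
    rw [mul_div_cancel₀ _ hm] at hx
    have hpos : (0 : ℝ) < (a ((-1 - (a 0)⁻¹) / (deriv (fun y => (a y)⁻¹) 0)))⁻¹ :=
      inv_pos.mpr (hapos _)
    linarith
  have ha0 : ∀ x, a x = a 0 := by
    intro x
    have hx := hgaff x
    rw [hm] at hx
    have : (a x)⁻¹ = (a 0)⁻¹ := by linarith
    exact inv_inj.mp this
  have hda0 : ∀ x, deriv a x = 0 := by
    have hconst : a = fun _ => a 0 := funext ha0
    intro x; rw [hconst]; exact deriv_const x (a 0)
  -- b is affine
  have hb2 : ∀ x, deriv (deriv b) x = 0 := by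
    intro x
    have h := hB x
    rw [hda0 x] at h
    have h' : a x * deriv (deriv b) x = 0 := by linarith
    exact (mul_eq_zero.mp h').resolve_left (hane x)
  have hb1 : ∀ x, deriv b x = deriv b 0 := fun x => is_const_of_deriv_eq_zero hbt' hb2 x 0
  have hbaff := aux_affine_of_deriv_const b hbt (deriv b 0) hb1
  -- c is quadratic
  have hc2 : ∀ x, deriv (deriv c) x = (1 + (deriv b 0) ^ 2) / (2 * a 0) := by
    intro x
    have h := hC x
    rw [ha0 x, hb1 x] at h
    have h0 := hane 0
    field_simp
    linarith
  have hc1 := aux_affine_of_deriv_const (deriv c) hct' ((1 + (deriv b 0) ^ 2) / (2 * a 0)) hc2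
  have hcq := aux_quad_of_deriv_affine c hct (deriv c 0) ((1 + (deriv b 0) ^ 2) / (2 * a 0)) hc1
  exact ⟨⟨a 0, ha0⟩, ⟨b 0, deriv b 0, hbaff⟩,
    ⟨c 0, deriv c 0, ((1 + (deriv b 0) ^ 2) / (2 * a 0)) / 2, hcq⟩⟩
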